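/- arXiv:2309.06522 — 2 statements merged into one kernel-verified Lean document; each statement's English description precedes it below -/
import Mathlib

section
/- Let L be a countable relational first-order language and let M be an ultrahomogeneous L-structure whose age contains only countably many structures up to isomorphism. Then M has the externally definable Ramsey property if and only if M has the fixed points on type spaces property (FPT). (Theorem 5.1(2).) -/
/-!
FPT ⇒ Ramsey. Let `χ` be defined with parameters `ē ⊨ p` and let `q` be an invariant type in
the orbit closure of `p`. By invariance and ultrahomogeneity `q` gives every copy of `A` the
same colour `i₀`, in the sense that `φ_{i₀}(x̄, f(ā)) ∈ q`; for a copy `h₀` of `B` the finite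
conjunction of these formulas over the copies of `A` in `h₀(B)` lies in `q`, so some translate
of it lies in `p`, i.e. `g ∘ h₀` is a `χ`-monochromatic copy of `B`.

Ramsey ⇒ FPT. Applying the Ramsey property to the product of finitely many definable colourings
of the copies of the finite sets `range m̄` gives, for finitely many pairs `(φ(x̄, m̄), h)`, one
automorphism `g` with `φ(ē, g m̄) ↔ φ(ē, g h m̄)` for all of them. By the finite intersection
property an ultrafilter `V` on `Aut(M)` contains all these sets, and the limit type
`q = lim_V g⁻¹ · p`, realised in the `V`-ultraproduct of `N`, is then invariant and in the orbit
closure of `p`.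
-/

open FirstOrder FirstOrder.Language CategoryTheory

universe u v w

namespace EDRP

/-- The colouring `χ` of the copies of `A` in `M` (copies identified with embeddings
`A ↪[L] M`) is externally definable by the formulas `φ i`: there are an elementary extension
`N ⪰ M` and a parameter tuple `ē` in `N` such that `χ(f(ā)) = i` iff `N ⊨ φ i (ē, f(ā))`. -/
def ExtDefinableBy (L : FirstOrder.Language.{u, v}) (M : Type w) [L.Structure M]
    (A : Type w) [L.Structure A]
    {k e : ℕ} (φ : Fin k → L.Formula (Fin e ⊕ A)) (χ : (A ↪[L] M) → Fin k) : Prop :=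
  ∃ (N : Bundled.{w} L.Structure) (emb : M ↪ₑ[L] N) (eb : Fin e → N),
    ∀ (f : A ↪[L] M) (i : Fin k),
      χ f = i ↔ (φ i).Realize (Sum.elim eb fun a => emb (f a))

/-- `χ` is an externally definable `k`-colouring of the copies of `A` in `M`. -/
def ExtDefinable (L : FirstOrder.Language.{u, v}) (M : Type w) [L.Structure M]
    (A : Type w) [L.Structure A] {k : ℕ} (χ : (A ↪[L] M) → Fin k) : Prop :=
  ∃ (e : ℕ) (φ : Fin k → L.Formula (Fin e ⊕ A)), ExtDefinableBy L M A φ χ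

/-- The copy of `B` in `M` given by the embedding `g` is `χ`-monochromatic: `χ` is constant
on the copies of `A` lying inside the image of `g`. -/
def MonochromaticOn (L : FirstOrder.Language.{u, v}) (M : Type w) [L.Structure M]
    (A B : Type w) [L.Structure A] [L.Structure B]
    {k : ℕ} (χ : (A ↪[L] M) → Fin k) (g : B ↪[L] M) : Prop :=
  ∀ f₁ f₂ : A ↪[L] M, Set.range (f₁ : A → M) ⊆ Set.range (g : B → M) →
    Set.range (f₂ : A → M) ⊆ Set.range (g : B → M) → χ f₁ = χ f₂

/-- `M` has the externally definable `ā`-Ramsey property, where `ā` enumerates `A`: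
for every `k ≥ 1`, every `B` in the age of `M` and every externally definable `k`-colouring `χ`
of the copies of `A` in `M`, there is a `χ`-monochromatic copy of `B` in `M`. -/
def ExtDefARamsey (L : FirstOrder.Language.{u, v}) (M : Type w) [L.Structure M]
    (A : Type w) [L.Structure A] : Prop :=
  ∀ (k : ℕ), 1 ≤ k → ∀ (B : Type w) [L.Structure B], Finite B → Nonempty (B ↪[L] M) →
    ∀ χ : (A ↪[L] M) → Fin k, ExtDefinable L M A χ →
      ∃ g : B ↪[L] M, MonochromaticOn L M A B χ g

/-- `M` has the externally definable Ramsey property. -/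
def ExtDefRamsey (L : FirstOrder.Language.{u, v}) (M : Type w) [L.Structure M] : Prop :=
  ∀ (A : Type w) [L.Structure A], Finite A → Nonempty (A ↪[L] M) → ExtDefARamsey L M A

/-- `M` has FPT_n: every complete `n`-type over `M` (represented by a realization `bp` in an
elementary extension `N ⪰ M`) admits an `Aut(M)`-invariant complete `n`-type over `M`
(represented by a realization `bq` in an elementary extension `N' ⪰ M`) lying in the closure of
its `Aut(M)`-orbit, where `φ(x̄, m̄) ∈ tp(b̄/M)` means `φ` is realized by `(b̄, m̄)`. -/
def FPTn (L : FirstOrder.Language.{u, v}) (M : Type w) [L.Structure M] (n : ℕ) : Prop :=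
  ∀ (N : Bundled.{w} L.Structure) (embp : M ↪ₑ[L] N) (bp : Fin n → N),
    ∃ (N' : Bundled.{w} L.Structure) (embq : M ↪ₑ[L] N') (bq : Fin n → N'),
      (∀ (g : M ≃[L] M) (m : ℕ) (φ : L.Formula (Fin n ⊕ Fin m)) (mb : Fin m → M),
        φ.Realize (Sum.elim bq fun j => embq (mb j)) ↔
          φ.Realize (Sum.elim bq fun j => embq (g (mb j)))) ∧
      (∀ (m : ℕ) (φ : L.Formula (Fin n ⊕ Fin m)) (mb : Fin m → M),
        φ.Realize (Sum.elim bq fun j => embq (mb j)) →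
          ∃ g : M ≃[L] M, φ.Realize (Sum.elim bp fun j => embp (g (mb j))))

/-- `M` has the fixed points on type spaces property: `FPT_n` for all `n ≥ 1`. -/
def FPT (L : FirstOrder.Language.{u, v}) (M : Type w) [L.Structure M] : Prop :=
  ∀ n : ℕ, 1 ≤ n → FPTn L M n

section

variable {L : FirstOrder.Language.{u, v}} {M : Type w} [L.Structure M]

theorem realize_relabel_sumMap {α β γ P : Type*} [L.Structure P] (φ : L.Formula (β ⊕ α))
    (r : α → γ) (vb : β → P) (v : γ → P) :
    (φ.relabel (Sum.map id r)).Realize (Sum.elim vb v) ↔ φ.Realize (Sum.elim vb (v ∘ r)) := by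
  rw [Formula.realize_relabel, Sum.elim_comp_map]
  rfl

theorem realize_relabel_sumMap_equiv {α β γ P : Type*} [L.Structure P] (e : α ≃ γ)
    (φ : L.Formula (β ⊕ α)) (vb : β → P) (v : α → P) :
    (φ.relabel (Sum.map id e)).Realize (Sum.elim vb (v ∘ e.symm)) ↔ φ.Realize (Sum.elim vb v) := by
  rw [realize_relabel_sumMap, Function.comp_assoc, e.symm_comp_self, Function.comp_id]

theorem monochromaticOn_iff {A B : Type w} [L.Structure A] [L.Structure B] {k : ℕ}
    (χ : (A ↪[L] M) → Fin k) (g : B ↪[L] M) :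
    MonochromaticOn L M A B χ g ↔ ∀ u₁ u₂ : A ↪[L] B, χ (g.comp u₁) = χ (g.comp u₂) := by
  have factor : ∀ f : A ↪[L] M, Set.range f ⊆ Set.range g → ∃ u : A ↪[L] B, g.comp u = f := by
    intro f hf
    refine ⟨g.equivRange.symm.toEmbedding.comp
      (f.codRestrict g.toHom.range fun a => Hom.mem_range.2 (hf ⟨a, rfl⟩)), ?_⟩
    ext a
    exact Subtype.ext_iff.1 (g.equivRange.apply_symm_apply _)
  refine ⟨fun h u₁ u₂ => h _ _ (Set.range_comp_subset_range u₁ g)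
    (Set.range_comp_subset_range u₂ g), fun h f₁ f₂ h₁ h₂ => ?_⟩
  obtain ⟨u₁, rfl⟩ := factor f₁ h₁
  obtain ⟨u₂, rfl⟩ := factor f₂ h₂
  exact h u₁ u₂

theorem _root_.FirstOrder.Language.IsUltrahomogeneous.exists_comp_eq
    (hM : L.IsUltrahomogeneous M) {A : Type*} [L.Structure A] [hA : Structure.FG L A]
    (f₁ f₂ : A ↪[L] M) : ∃ g : M ≃[L] M, g.toEmbedding.comp f₁ = f₂ := by
  obtain ⟨g, hg⟩ :=
    hM f₁.toHom.range (hA.range f₁.toHom) (f₂.comp f₁.equivRange.symm.toEmbedding)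
  refine ⟨g, Embedding.ext fun a => ?_⟩
  simpa using (DFunLike.congr_fun hg (f₁.equivRange a)).symm

section InvariantTypes

variable {N N' : Type*} [L.Structure N] [L.Structure N'] {n : ℕ}

/- The two conjuncts of `FPTn`, for `q = tp(bq/M)` and `p = tp(bp/M)`. -/

def IsInvariantType (embq : M ↪ₑ[L] N') (bq : Fin n → N') : Prop :=
  ∀ (g : M ≃[L] M) (m : ℕ) (φ : L.Formula (Fin n ⊕ Fin m)) (mb : Fin m → M),
    φ.Realize (Sum.elim bq fun j => embq (mb j)) ↔
      φ.Realize (Sum.elim bq fun j => embq (g (mb j)))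

def InOrbitClosure (embq : M ↪ₑ[L] N') (bq : Fin n → N') (embp : M ↪ₑ[L] N)
    (bp : Fin n → N) : Prop :=
  ∀ (m : ℕ) (φ : L.Formula (Fin n ⊕ Fin m)) (mb : Fin m → M),
    φ.Realize (Sum.elim bq fun j => embq (mb j)) →
      ∃ g : M ≃[L] M, φ.Realize (Sum.elim bp fun j => embp (g (mb j)))

variable {embq : M ↪ₑ[L] N'} {bq : Fin n → N'} {embp : M ↪ₑ[L] N} {bp : Fin n → N}

theorem IsInvariantType.realize_iff (hq : IsInvariantType embq bq) (g : M ≃[L] M) {α : Type*}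
    [Finite α] (φ : L.Formula (Fin n ⊕ α)) (mb : α → M) :
    φ.Realize (Sum.elim bq (embq ∘ mb)) ↔ φ.Realize (Sum.elim bq (embq ∘ g ∘ mb)) := by
  let e := Finite.equivFin α
  rw [← realize_relabel_sumMap_equiv e, ← realize_relabel_sumMap_equiv e]
  exact hq g _ _ (mb ∘ e.symm)

theorem InOrbitClosure.exists_realize (hq : InOrbitClosure embq bq embp bp) {α : Type*}
    [Finite α] (φ : L.Formula (Fin n ⊕ α)) (mb : α → M)
    (h : φ.Realize (Sum.elim bq (embq ∘ mb))) :
    ∃ g : M ≃[L] M, φ.Realize (Sum.elim bp (embp ∘ g ∘ mb)) := by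
  let e := Finite.equivFin α
  rw [← realize_relabel_sumMap_equiv e] at h
  obtain ⟨g, hg⟩ := hq _ _ (mb ∘ e.symm) h
  exact ⟨g, (realize_relabel_sumMap_equiv e _ _ (embp ∘ g ∘ mb)).1 hg⟩

theorem InOrbitClosure.realize_of_forall (hq : InOrbitClosure embq bq embp bp) {α : Type*}
    [Finite α] (φ : L.Formula (Fin n ⊕ α)) (mb : α → M)
    (h : ∀ g : M ≃[L] M, φ.Realize (Sum.elim bp (embp ∘ g ∘ mb))) :
    φ.Realize (Sum.elim bq (embq ∘ mb)) := by
  by_contra hn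
  obtain ⟨g, hg⟩ := hq.exists_realize φ.not mb hn
  exact hg (h g)

end InvariantTypes

section FPTToRamsey

theorem fptn_zero : FPTn L M 0 := by
  intro N emb b
  refine ⟨N, emb, b, fun g m φ mb => ?_, fun m φ mb h => ⟨.refl L M, h⟩⟩
  have through_M : ∀ v : Fin m → M,
      (Sum.elim b fun j => emb (v j)) = emb ∘ Sum.elim finZeroElim v := by
    intro v
    ext (i | i)
    · exact i.elim0
    · rfl
  have hg : Sum.elim finZeroElim (g ∘ mb) = g ∘ Sum.elim finZeroElim mb := by
    ext (i | i)
    · exact i.elim0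
    · rfl
  rw [through_M, through_M, emb.map_formula, emb.map_formula]
  exact (hg ▸ StrongHomClass.realize_formula g φ).symm

theorem FPT.fptn (h : FPT L M) (n : ℕ) : FPTn L M n := by
  rcases Nat.eq_zero_or_pos n with rfl | hn
  · exact fptn_zero
  · exact h n hn

variable {A : Type w} [L.Structure A] [Finite A] {N N' : Type*} [L.Structure N] [L.Structure N']
  {k e : ℕ} {φ : Fin k → L.Formula (Fin e ⊕ A)} {χ : (A ↪[L] M) → Fin k}
  {emb : M ↪ₑ[L] N} {eb : Fin e → N} {embq : M ↪ₑ[L] N'} {bq : Fin e → N'}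

theorem InOrbitClosure.exists_colour_realize (hq : InOrbitClosure embq bq emb eb)
    (hχ : ∀ f i, χ f = i ↔ (φ i).Realize (Sum.elim eb fun a => emb (f a))) (f : A ↪[L] M) :
    ∃ i, (φ i).Realize (Sum.elim bq (embq ∘ f)) :=
  Formula.realize_iSup.1 <| hq.realize_of_forall (Formula.iSup φ) f fun g =>
    Formula.realize_iSup.2 ⟨χ (g.toEmbedding.comp f), (hχ _ _).1 rfl⟩

theorem IsInvariantType.realize_of_realize (hM : L.IsUltrahomogeneous M)
    (hq : IsInvariantType embq bq) (ψ : L.Formula (Fin e ⊕ A)) {f₀ : A ↪[L] M}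
    (h : ψ.Realize (Sum.elim bq (embq ∘ f₀))) (f : A ↪[L] M) :
    ψ.Realize (Sum.elim bq (embq ∘ f)) := by
  have : Structure.FG L A := Structure.FG.of_finite
  obtain ⟨g, rfl⟩ := hM.exists_comp_eq f₀ f
  exact (hq.realize_iff g ψ f₀).1 h

theorem extDefRamsey_of_fptn (hM : L.IsUltrahomogeneous M) (hF : ∀ n, FPTn L M n) :
    ExtDefRamsey L M := by
  intro A _ _ ⟨f₀⟩ k _ B _ _ ⟨h₀⟩ χ ⟨e, φ, N, emb, eb, hχ⟩
  obtain ⟨N', embq, bq, hinv, hcl⟩ := hF e N emb eb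
  obtain ⟨i₀, hi₀⟩ := InOrbitClosure.exists_colour_realize hcl hχ f₀
  have : Finite (A ↪[L] B) := Finite.of_injective _ DFunLike.coe_injective
  -- `q` puts every copy of `A` inside `h₀(B)` in colour `i₀`; pull this back to `p` along `g`.
  obtain ⟨g, hg⟩ := InOrbitClosure.exists_realize hcl
    (Formula.iInf fun u : A ↪[L] B => (φ i₀).relabel (Sum.map id u)) h₀
    (Formula.realize_iInf.2 fun u => (realize_relabel_sumMap _ _ _ _).2 <|
      IsInvariantType.realize_of_realize hM hinv (φ i₀) hi₀ (h₀.comp u))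
  have hcol : ∀ u : A ↪[L] B, χ ((g.toEmbedding.comp h₀).comp u) = i₀ := fun u =>
    (hχ _ _).2 ((realize_relabel_sumMap _ _ eb (emb ∘ g ∘ h₀)).1 (Formula.realize_iInf.1 hg u))
  exact ⟨g.toEmbedding.comp h₀, (monochromaticOn_iff _ _).2 fun u₁ u₂ => by rw [hcol, hcol]⟩

end FPTToRamsey

section RamseyToFPT

variable {N : Type w} [L.Structure N] (emb : M ↪ₑ[L] N) {e : ℕ} (b : Fin e → N)

theorem ExtDefARamsey.exists_forall_realize_iff {A : Type w} [L.Structure A]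
    (hA : ExtDefARamsey L M A) {J : Type*} [Finite J] (ψ : J → L.Formula (Fin e ⊕ A))
    {B : Type w} [L.Structure B] [Finite B] (hB : Nonempty (B ↪[L] M)) :
    ∃ w : B ↪[L] M, ∀ j (u₁ u₂ : A ↪[L] B), (ψ j).Realize (Sum.elim b (emb ∘ w.comp u₁)) ↔
      (ψ j).Realize (Sum.elim b (emb ∘ w.comp u₂)) := by
  classical
  let col : (A ↪[L] M) → J → Bool := fun f j => decide ((ψ j).Realize (Sum.elim b (emb ∘ f)))
  let eqv := Finite.equivFin (J → Bool)
  have hdef : ExtDefinableBy L M A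
      (fun i => Formula.iInf fun j => cond (eqv.symm i j) (ψ j) (ψ j).not) (eqv ∘ col) := by
    refine ⟨⟨N, _⟩, emb, b, fun f i => ?_⟩
    rw [Function.comp_apply, ← eqv.eq_symm_apply, funext_iff, Formula.realize_iInf]
    refine forall_congr' fun j => ?_
    cases eqv.symm i j <;> simp [col, Function.comp_def]
  obtain ⟨w, hw⟩ := hA _ Nat.card_pos B ‹_› hB _ ⟨e, _, hdef⟩
  refine ⟨w, fun j u₁ u₂ => ?_⟩
  simpa [col] using congr_fun (eqv.injective ((monochromaticOn_iff _ w).1 hw u₁ u₂)) j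

variable (L) in
def setSubstructure [L.IsRelational] (s : Set M) : L.Substructure M where
  carrier := s
  fun_mem {_} f := isEmptyElim f

variable [L.IsRelational]

theorem finite_setSubstructure {s : Set M} (hs : s.Finite) : Finite (setSubstructure L s) :=
  hs.to_subtype

theorem exists_finite_superset_extend (hM : L.IsUltrahomogeneous M) {J : Type*} [Finite J]
    {s : J → Set M} {S t : Set M} (hsS : ∀ j, s j ⊆ S) (hS : S.Finite) (ht : t.Finite) :
    ∃ T : Set M, T.Finite ∧ ∃ htT : t ⊆ T,
      ∀ j (u : setSubstructure L (s j) ↪[L] setSubstructure L t),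
        ∃ v : setSubstructure L S ↪[L] setSubstructure L T,
          v.comp (Substructure.inclusion (hsS j)) = (Substructure.inclusion htT).comp u := by
  have : ∀ j, Finite (setSubstructure L (s j)) :=
    fun j => finite_setSubstructure (hS.subset (hsS j))
  have : ∀ j, Structure.FG L (setSubstructure L (s j)) := fun j => Structure.FG.of_finite
  have : Finite (setSubstructure L t) := finite_setSubstructure ht
  have : ∀ j, Finite (setSubstructure L (s j) ↪[L] setSubstructure L t) := fun j =>
    Finite.of_injective _ DFunLike.coe_injective
  choose g hg using fun (p : Σ j, setSubstructure L (s j) ↪[L] setSubstructure L t) =>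
    hM.exists_comp_eq (setSubstructure L (s p.1)).subtype
      ((setSubstructure L t).subtype.comp p.2)
  refine ⟨t ∪ ⋃ p, g p '' S, ht.union (Set.finite_iUnion fun p => hS.image _),
    Set.subset_union_left, fun j u => ⟨Embedding.codRestrict _
      ((g ⟨j, u⟩).toEmbedding.comp (setSubstructure L S).subtype)
      fun x => Or.inr (Set.mem_iUnion.2 ⟨⟨j, u⟩, x, x.2, rfl⟩), ?_⟩⟩
  ext x
  exact DFunLike.congr_fun (hg ⟨j, u⟩) x

theorem ExtDefRamsey.exists_forall_realize_iff (hM : L.IsUltrahomogeneous M)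
    (ram : ExtDefRamsey L M) {J : Type*} [Finite J] {s : J → Set M} (hs : ∀ j, (s j).Finite)
    (ψ : ∀ j, L.Formula (Fin e ⊕ setSubstructure L (s j))) {t : Set M} (ht : t.Finite) :
    ∃ w : setSubstructure L t ↪[L] M,
      ∀ j (u₁ u₂ : setSubstructure L (s j) ↪[L] setSubstructure L t),
        (ψ j).Realize (Sum.elim b (emb ∘ w.comp u₁)) ↔
          (ψ j).Realize (Sum.elim b (emb ∘ w.comp u₂)) := by
  let S := ⋃ j, s j
  have hsS : ∀ j, s j ⊆ S := Set.subset_iUnion s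
  have hS : S.Finite := Set.finite_iUnion hs
  obtain ⟨T, hT, htT, hext⟩ := exists_finite_superset_extend hM hsS hS ht
  have : Finite (setSubstructure L S) := finite_setSubstructure hS
  have : Finite (setSubstructure L T) := finite_setSubstructure hT
  -- Colour the copies of `S` through their restrictions to the `s j`: every copy of `s j` inside
  -- `t` is such a restriction of a copy of `S` inside `T`.
  obtain ⟨w, hw⟩ := ExtDefARamsey.exists_forall_realize_iff emb b
    (ram _ ‹_› ⟨(setSubstructure L S).subtype⟩)
    (fun j => (ψ j).relabel (Sum.map id (Substructure.inclusion (hsS j))))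
    ⟨(setSubstructure L T).subtype⟩
  refine ⟨w.comp (Substructure.inclusion htT), fun j u₁ u₂ => ?_⟩
  obtain ⟨v₁, hv₁⟩ := hext j u₁
  obtain ⟨v₂, hv₂⟩ := hext j u₂
  rw [Embedding.comp_assoc, Embedding.comp_assoc, ← hv₁, ← hv₂, ← Embedding.comp_assoc,
    ← Embedding.comp_assoc]
  exact (realize_relabel_sumMap _ _ b (emb ∘ w.comp v₁)).symm.trans
    ((hw j v₁ v₂).trans (realize_relabel_sumMap _ _ _ _))

theorem ExtDefRamsey.exists_forall_realize_comp_iff (hM : L.IsUltrahomogeneous M)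
    (ram : ExtDefRamsey L M) {J : Type*} [Finite J] {α : J → Type*} [∀ j, Finite (α j)]
    (φ : ∀ j, L.Formula (Fin e ⊕ α j)) (mb : ∀ j, α j → M) (h : J → M ≃[L] M) :
    ∃ g : M ≃[L] M, ∀ j, (φ j).Realize (Sum.elim b (emb ∘ g ∘ mb j)) ↔
      (φ j).Realize (Sum.elim b (emb ∘ g ∘ h j ∘ mb j)) := by
  let s j := Set.range (mb j)
  let t := ⋃ j, (s j ∪ h j '' s j)
  have ht : t.Finite :=
    Set.finite_iUnion fun j => (Set.finite_range _).union ((Set.finite_range _).image _)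
  let pattern j (i : α j) : setSubstructure L (s j) := ⟨mb j i, Set.mem_range_self i⟩
  obtain ⟨w, hw⟩ := ram.exists_forall_realize_iff emb b hM (fun j => Set.finite_range (mb j))
    (fun j => (φ j).relabel (Sum.map id (pattern j))) ht
  have : Finite (setSubstructure L t) := finite_setSubstructure ht
  have : Structure.FG L (setSubstructure L t) := Structure.FG.of_finite
  obtain ⟨g, rfl⟩ := hM.exists_comp_eq (setSubstructure L t).subtype w
  refine ⟨g, fun j => ?_⟩
  -- `mb j` and `h j ∘ mb j` are two copies of the same pattern inside `t`.
  have hst : s j ⊆ t := fun x hx => Set.mem_iUnion.2 ⟨j, Or.inl hx⟩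
  have := hw j (Substructure.inclusion hst) <| Embedding.codRestrict _
    ((h j).toEmbedding.comp (setSubstructure L (s j)).subtype)
    fun x => Set.mem_iUnion.2 ⟨j, Or.inr ⟨x, x.2, rfl⟩⟩
  rwa [realize_relabel_sumMap, realize_relabel_sumMap] at this

theorem exists_ultrafilter_forall_mem {α ι : Type*} (D : ι → Set α)
    (hD : ∀ s : Finset ι, (⋂ i ∈ s, D i).Nonempty) : ∃ V : Ultrafilter α, ∀ i, D i ∈ V := by
  classical
  obtain ⟨V, hV⟩ := Ultrafilter.exists_ultrafilter_of_finite_inter_nonempty (Set.range D)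
    fun T hT => by
      rw [← Set.image_univ] at hT
      obtain ⟨s, -, rfl⟩ := Finset.subset_set_image_iff.1 hT
      simpa [Set.sInter_image] using hD s
  exact ⟨V, fun i => hV ⟨i, rfl⟩⟩

theorem ExtDefRamsey.exists_ultrafilter_eventually_realize_iff (hM : L.IsUltrahomogeneous M)
    (ram : ExtDefRamsey L M) :
    ∃ V : Ultrafilter (M ≃[L] M), ∀ (m : ℕ) (φ : L.Formula (Fin e ⊕ Fin m)) (mb : Fin m → M)
      (h : M ≃[L] M), (∀ᶠ g : M ≃[L] M in V, φ.Realize (Sum.elim b (emb ∘ g ∘ mb))) ↔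
        ∀ᶠ g : M ≃[L] M in V, φ.Realize (Sum.elim b (emb ∘ g ∘ h ∘ mb)) := by
  obtain ⟨V, hV⟩ := exists_ultrafilter_forall_mem
    (fun c : (Σ m, L.Formula (Fin e ⊕ Fin m) × (Fin m → M)) × (M ≃[L] M) =>
      {g : M ≃[L] M | c.1.2.1.Realize (Sum.elim b (emb ∘ g ∘ c.1.2.2)) ↔
        c.1.2.1.Realize (Sum.elim b (emb ∘ g ∘ c.2 ∘ c.1.2.2))})
    fun s => by
      obtain ⟨g, hg⟩ := ram.exists_forall_realize_comp_iff emb b hM (J := s)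
        (fun c => c.1.1.2.1) (fun c => c.1.1.2.2) (fun c => c.1.2)
      exact ⟨g, Set.mem_iInter₂.2 fun c hc => hg ⟨c, hc⟩⟩
  exact ⟨V, fun m φ mb h => Filter.eventually_congr (hV ⟨⟨m, φ, mb⟩, h⟩)⟩

end RamseyToFPT

section LimitType

variable {N : Type w} [L.Structure N] [Nonempty N] (emb : M ↪ₑ[L] N) {e : ℕ} (b : Fin e → N)
  (V : Ultrafilter (M ≃[L] M))

/- The type `lim_V g⁻¹ · tp(b/M)`: realised by the constant sequence `b` in the `V`-ultraproduct
of `N`, into which `M` embeds by `m ↦ (emb (g m))_g`. -/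

def limitEmbedding : M ↪ₑ[L] (V : Filter (M ≃[L] M)).Product fun _ => N where
  toFun x := ((fun g : M ≃[L] M => emb (g x)) : (V : Filter (M ≃[L] M)).Product fun _ => N)
  map_formula' _ φ x := by
    refine (Ultraproduct.realize_formula_cast φ _).trans
      ((Filter.eventually_congr (.of_forall fun g => ?_)).trans Filter.eventually_const)
    exact (emb.map_formula φ (g ∘ x)).trans (StrongHomClass.realize_formula g φ)

def limitTuple : Fin e → (V : Filter (M ≃[L] M)).Product fun _ => N :=
  fun j => ((fun _ => b j : (M ≃[L] M) → N) : (V : Filter (M ≃[L] M)).Product fun _ => N)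

theorem realize_limit_iff {α : Type*} (φ : L.Formula (Fin e ⊕ α)) (mb : α → M) :
    φ.Realize (Sum.elim (limitTuple b V) (limitEmbedding emb V ∘ mb)) ↔
      ∀ᶠ g : M ≃[L] M in V, φ.Realize (Sum.elim b (emb ∘ g ∘ mb)) := by
  have : Sum.elim (limitTuple b V) (limitEmbedding emb V ∘ mb) = fun i =>
      ((fun g : M ≃[L] M => Sum.elim b (emb ∘ g ∘ mb) i) :
        (V : Filter (M ≃[L] M)).Product fun _ => N) := by
    ext (i | i) <;> rfl
  rw [this]
  exact Ultraproduct.realize_formula_cast φ _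

theorem isInvariantType_limit (hV : ∀ (m : ℕ) (φ : L.Formula (Fin e ⊕ Fin m)) (mb : Fin m → M)
      (h : M ≃[L] M), (∀ᶠ g : M ≃[L] M in V, φ.Realize (Sum.elim b (emb ∘ g ∘ mb))) ↔
        ∀ᶠ g : M ≃[L] M in V, φ.Realize (Sum.elim b (emb ∘ g ∘ h ∘ mb))) :
    IsInvariantType (limitEmbedding emb V) (limitTuple b V) := fun g m φ mb =>
  (realize_limit_iff emb b V φ mb).trans
    ((hV m φ mb g).trans (realize_limit_iff emb b V φ (g ∘ mb)).symm)

theorem inOrbitClosure_limit : InOrbitClosure (limitEmbedding emb V) (limitTuple b V) emb b :=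
  fun _ φ mb h => ((realize_limit_iff emb b V φ mb).1 h).exists

end LimitType

theorem ExtDefRamsey.fpt [L.IsRelational] (hM : L.IsUltrahomogeneous M)
    (ram : ExtDefRamsey L M) : FPT L M := by
  intro n hn N emb b
  have : Nonempty N := ⟨b ⟨0, hn⟩⟩
  obtain ⟨V, hV⟩ := ram.exists_ultrafilter_eventually_realize_iff emb b hM
  exact ⟨Bundled.of ((V : Filter (M ≃[L] M)).Product fun _ => N), limitEmbedding emb V,
    limitTuple b V, isInvariantType_limit emb b V hV, inOrbitClosure_limit emb b V⟩

end

theorem extDefRamsey_iff_fpt_general (L : FirstOrder.Language.{u, v}) [L.IsRelational]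
    (M : Type w) [L.Structure M]
    (hM : L.IsUltrahomogeneous M) :
    ExtDefRamsey L M ↔ FPT L M :=
  ⟨ExtDefRamsey.fpt hM, fun h => extDefRamsey_of_fptn hM h.fptn⟩

/-- **Theorem 5.1(2).** An ultrahomogeneous structure `M` in a countable relational language
whose age is countable up to isomorphism has the externally definable Ramsey property iff it
has FPT. -/
theorem extDefRamsey_iff_fpt (L : FirstOrder.Language.{u, v}) [L.IsRelational]
    [Countable L.Symbols] (M : Type w) [L.Structure M]
    (hM : L.IsUltrahomogeneous M)
    (hage : (Quotient.mk' '' L.age M).Countable) :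
    ExtDefRamsey L M ↔ FPT L M :=
  extDefRamsey_iff_fpt_general L M hM

end EDRP
end

section
/- Let L be a countable relational language in which every relation symbol has arity at most t, where t ≥ 2. Let M be an ultrahomogeneous L-structure such that Th(M) has quantifier elimination. Suppose that for every ā ∈ Age(M) with |ā| < t, every B ∈ Age(M), and every externally atomic-definable 2-colouring χ of Binom(M,ā), there is a χ-monochromatic copy of B in M. Then M has the externally definable Ramsey property. (Proposition 3.15.) -/
open FirstOrder FirstOrder.Language CategoryTheory

universe u v w

namespace EDRP

/-- The 2-colouring `χ` of the copies of `A` in `M` is externally definable by the single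
formula `φ`, where colour `0` corresponds to satisfaction of `φ`. -/
def ExtDefinableBy2 (L : FirstOrder.Language.{u, v}) (M : Type w) [L.Structure M]
    (A : Type w) [L.Structure A] {e : ℕ}
    (φ : L.Formula (Fin e ⊕ A)) (χ : (A ↪[L] M) → Fin 2) : Prop :=
  ∃ (N : Bundled.{w} L.Structure) (emb : M ↪ₑ[L] N) (eb : Fin e → N),
    ∀ f : A ↪[L] M, χ f = 0 ↔ φ.Realize (Sum.elim eb fun a => emb (f a))

/-- `Th(M)` has quantifier elimination: every formula is equivalent modulo the complete theory
of `M` to a quantifier-free formula. -/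
def HasQE (L : FirstOrder.Language.{u, v}) (M : Type w) [L.Structure M] : Prop :=
  ∀ (n : ℕ) (φ : L.Formula (Fin n)), ∃ ψ : L.Formula (Fin n),
    ψ.IsQF ∧ FirstOrder.Language.Theory.Iff (L.completeTheory M) φ ψ

/-!
By quantifier elimination each colour class is defined by a quantifier-free formula, so it
suffices to find a copy of `B` on whose copies of `A` every atomic subformula has constant truth
value; finite Ramsey witnesses for the individual atoms are nested to handle all of them at once.
An atomic formula without parameters is preserved by embeddings, hence constant, and one with a
parameter mentions fewer than `t` elements of `A`, so it is an atomic colouring of a substructure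
of size `< t`. For those the hypothesis yields monochromatic copies for each choice of parameters,
and compactness (an ultraproduct of counterexamples indexed by the finite subsets of `M`, each
moved into place by ultrahomogeneity) turns this into a finite witness uniform in the parameters.
-/

section

variable {L : FirstOrder.Language.{u, v}} {M : Type w} [L.Structure M]

structure ExtParams (L : FirstOrder.Language.{u, v}) (M : Type w) [L.Structure M] (e : ℕ) where
  N : Bundled.{w} L.Structure
  emb : M ↪ₑ[L] N
  eb : Fin e → N

namespace ExtParams

variable {e : ℕ} {A : Type*}

def Realize (p : ExtParams L M e) (θ : L.Formula (Fin e ⊕ A)) (f : A → M) : Prop :=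
  θ.Realize (Sum.elim p.eb (p.emb ∘ f))

instance [Nonempty M] (p : ExtParams L M e) : Nonempty p.N :=
  ⟨p.emb (Classical.arbitrary M)⟩

def comp (p : ExtParams L M e) (σ : M ≃[L] M) : ExtParams L M e :=
  ⟨p.N, p.emb.comp σ.toElementaryEmbedding, p.eb⟩

lemma realize_comp_symm (p : ExtParams L M e) (σ : M ≃[L] M) (θ : L.Formula (Fin e ⊕ A))
    (f : A → M) : (p.comp σ).Realize θ (σ.symm ∘ f) ↔ p.Realize θ f := by
  have hf : ⇑(p.emb.comp σ.toElementaryEmbedding) ∘ σ.symm ∘ f = p.emb ∘ f :=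
    funext fun x => congrArg p.emb (σ.apply_symm_apply (f x))
  exact iff_of_eq (congrArg (fun v => θ.Realize (Sum.elim p.eb v)) hf)

end ExtParams

def ConstOn {e : ℕ} {A : Type*} [L.Structure A] (θ : L.Formula (Fin e ⊕ A))
    (p : ExtParams L M e) (X : Set M) : Prop :=
  ∀ f₁ f₂ : A ↪[L] M, Set.range f₁ ⊆ X → Set.range f₂ ⊆ X → (p.Realize θ f₁ ↔ p.Realize θ f₂)

section ConstOn

variable {e : ℕ} {A : Type*} [L.Structure A] {θ : L.Formula (Fin e ⊕ A)} {p : ExtParams L M e}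

lemma constOn_antitone : Antitone (ConstOn θ p) :=
  fun _ _ hXY h f₁ f₂ h₁ h₂ => h f₁ f₂ (h₁.trans hXY) (h₂.trans hXY)

lemma ConstOn.imp {θ' : L.Formula (Fin e ⊕ A)} {X : Set M} (h : ConstOn θ p X)
    (h' : ConstOn θ' p X) : ConstOn (θ.imp θ') p X :=
  fun f₁ f₂ h₁ h₂ => imp_congr (h f₁ f₂ h₁ h₂) (h' f₁ f₂ h₁ h₂)

lemma ConstOn.image_equiv {X : Set M} {σ : M ≃[L] M} (h : ConstOn θ (p.comp σ) X) :
    ConstOn θ p (σ '' X) := by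
  intro f₁ f₂ h₁ h₂
  have hpull : ∀ f : A ↪[L] M, Set.range f ⊆ σ '' X →
      Set.range (σ.symm.toEmbedding.comp f) ⊆ X := by
    rintro f hf _ ⟨a, rfl⟩
    obtain ⟨x, hx, hxf⟩ := hf ⟨a, rfl⟩
    simp [← hxf, hx]
  rw [← p.realize_comp_symm σ θ f₁, ← p.realize_comp_symm σ θ f₂]
  exact h _ _ (hpull f₁ h₁) (hpull f₂ h₂)

end ConstOn

/-- The arrow relation `B → (T)` for the properties `P p`, uniformly in `p`. -/
def FinitaryRamsey (L : FirstOrder.Language.{u, v}) (M : Type w) [L.Structure M] {π : Type*}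
    (P : π → Set M → Prop) : Prop :=
  ∀ (T : Type w) [L.Structure T], Finite T → Nonempty (T ↪[L] M) →
    ∃ B : Bundled.{w} L.Structure, Finite B ∧ Nonempty (B ↪[L] M) ∧
      ∀ (gB : B ↪[L] M) (p : π), ∃ g : T ↪[L] M, Set.range g ⊆ Set.range gB ∧ P p (Set.range g)

namespace FinitaryRamsey

variable {π : Type*} {P Q : π → Set M → Prop}

lemma of_forall (h : ∀ p X, P p X) : FinitaryRamsey L M P :=
  fun T _ hT neT => ⟨⟨T, inferInstance⟩, hT, neT, fun gB _ => ⟨gB, subset_rfl, h _ _⟩⟩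

lemma mono (hP : FinitaryRamsey L M P) (hPQ : ∀ p X, P p X → Q p X) : FinitaryRamsey L M Q := by
  intro T _ hT neT
  obtain ⟨B, hB, neB, hPB⟩ := hP T hT neT
  refine ⟨B, hB, neB, fun gB p => ?_⟩
  obtain ⟨g, hg, hPg⟩ := hPB gB p
  exact ⟨g, hg, hPQ _ _ hPg⟩

lemma and (hP : FinitaryRamsey L M P) (hP_anti : ∀ p, Antitone (P p)) (hQ : FinitaryRamsey L M Q) :
    FinitaryRamsey L M (fun p X => P p X ∧ Q p X) := by
  intro T _ hT neT
  obtain ⟨B₁, hB₁, neB₁, hQB₁⟩ := hQ T hT neT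
  obtain ⟨B₀, hB₀, neB₀, hPB₀⟩ := hP B₁ hB₁ neB₁
  refine ⟨B₀, hB₀, neB₀, fun gB p => ?_⟩
  obtain ⟨g₁, hg₁, hPg₁⟩ := hPB₀ gB p
  obtain ⟨g, hg, hQg⟩ := hQB₁ g₁ p
  exact ⟨g, hg.trans hg₁, hP_anti p hg hPg₁, hQg⟩

lemma forall_finite {ι : Type*} [Finite ι] {P : ι → π → Set M → Prop}
    (hP : ∀ i, FinitaryRamsey L M (P i)) (hP_anti : ∀ i p, Antitone (P i p)) :
    FinitaryRamsey L M (fun p X => ∀ i, P i p X) := by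
  classical
  have : Fintype ι := Fintype.ofFinite ι
  suffices h : ∀ s : Finset ι, FinitaryRamsey L M (fun p X => ∀ i ∈ s, P i p X) from
    (h Finset.univ).mono fun p X hX i => hX i (Finset.mem_univ i)
  intro s
  induction s using Finset.induction_on with
  | empty => exact of_forall fun _ _ i hi => absurd hi (Finset.notMem_empty i)
  | insert a s _ ih =>
    exact ((hP a).and (hP_anti a) ih).mono fun _ _ hX => Finset.forall_mem_insert _ _ _ |>.2 hX

end FinitaryRamsey

namespace ExtParams

variable {e : ℕ} {ι : Type w} (𝒰 : Ultrafilter ι) (p : ι → ExtParams L M e) [Nonempty M]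

/-- The diagonal embedding into the ultraproduct is elementary by Łoś's theorem. -/
noncomputable def ultraproduct : ExtParams L M e :=
  { N := ⟨(𝒰 : Filter ι).Product fun i => (p i).N, inferInstance⟩
    emb :=
      { toFun := fun x => ((fun i => (p i).emb x : ∀ i, (p i).N) : (𝒰 : Filter ι).Product _)
        map_formula' := fun _ φ x => by
          refine (Ultraproduct.realize_formula_cast φ _).trans ?_
          exact (Filter.eventually_congr (.of_forall fun i => (p i).emb.map_formula φ x)).trans
            Filter.eventually_const }
    eb := fun j => ((fun i => (p i).eb j : ∀ i, (p i).N) : (𝒰 : Filter ι).Product _) }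

lemma realize_ultraproduct {A : Type*} (θ : L.Formula (Fin e ⊕ A)) (f : A → M) :
    (ultraproduct 𝒰 p).Realize θ f ↔ ∀ᶠ i in 𝒰, (p i).Realize θ f := by
  have hv : Sum.elim (ultraproduct 𝒰 p).eb ((ultraproduct 𝒰 p).emb ∘ f) = fun y =>
      ((fun i => Sum.elim (p i).eb ((p i).emb ∘ f) y : ∀ i, (p i).N) :
        (𝒰 : Filter ι).Product _) := by
    funext y
    cases y <;> rfl
  rw [Realize, hv]
  exact Ultraproduct.realize_formula_cast θ _

lemma eventually_realize_iff_ultraproduct {A : Type*} (θ : L.Formula (Fin e ⊕ A)) (f : A → M) :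
    ∀ᶠ i in 𝒰, ((p i).Realize θ f ↔ (ultraproduct 𝒰 p).Realize θ f) := by
  by_cases h : (ultraproduct 𝒰 p).Realize θ f
  · filter_upwards [(realize_ultraproduct 𝒰 p θ f).1 h] with i hi using iff_of_true hi h
  · have h' := h
    rw [realize_ultraproduct, ← Ultrafilter.eventually_not] at h'
    filter_upwards [h'] with i hi using iff_of_false hi h

end ExtParams

lemma finite_setOf_range_subset {A : Type*} [L.Structure A] [Finite A] {X : Set M}
    (hX : X.Finite) : {f : A ↪[L] M | Set.range f ⊆ X}.Finite := by
  have : Finite X := hX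
  refine Set.finite_coe_iff.1 (Finite.of_injective
    (fun f : {f : A ↪[L] M | Set.range f ⊆ X} => fun a => (⟨f.1 a, f.2 ⟨a, rfl⟩⟩ : X)) ?_)
  intro f₁ f₂ hf
  exact Subtype.ext (Embedding.ext fun a => congrArg Subtype.val (congrFun hf a))

/-- Only finitely many copies of `A` lie inside the finite set `X`. -/
lemma ConstOn.eventually_of_ultraproduct [Nonempty M] {e : ℕ} {A : Type*} [L.Structure A]
    [Finite A] {θ : L.Formula (Fin e ⊕ A)} {ι : Type w} {𝒰 : Ultrafilter ι}
    {p : ι → ExtParams L M e} {X : Set M} (hX : X.Finite)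
    (h : ConstOn θ (ExtParams.ultraproduct 𝒰 p) X) : ∀ᶠ i in 𝒰, ConstOn θ (p i) X := by
  have hall := (finite_setOf_range_subset (L := L) (A := A) hX).eventually_all.2
    fun f _ => ExtParams.eventually_realize_iff_ultraproduct 𝒰 p θ f
  filter_upwards [hall] with i hi f₁ f₂ h₁ h₂
  exact (hi f₁ h₁).trans ((h f₁ f₂ h₁ h₂).trans (hi f₂ h₂).symm)

/-- In an ultrahomogeneous `M` every copy of the finite substructure on `X` is moved onto `X` by
an automorphism, so parameters that are bad for some copy can be made bad for `X` itself. -/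
lemma exists_params_forall_not_constOn [L.IsRelational] (hM : L.IsUltrahomogeneous M) {e : ℕ}
    {A T : Type*} [L.Structure A] [L.Structure T] {θ : L.Formula (Fin e ⊕ A)}
    (hbad : ∀ B : Bundled.{w} L.Structure, Finite B → Nonempty (B ↪[L] M) →
      ∃ (gB : B ↪[L] M) (p : ExtParams L M e), ∀ g : T ↪[L] M, Set.range g ⊆ Set.range gB →
        ¬ConstOn θ p (Set.range g))
    {X : Set M} (hX : X.Finite) :
    ∃ p : ExtParams L M e, ∀ g : T ↪[L] M, Set.range g ⊆ X → ¬ConstOn θ p (Set.range g) := by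
  let S := Substructure.closure L X
  have hS : (S : Set M) = X := Substructure.closure_eq_of_isRelational L X
  have : Finite S := by rw [← hS] at hX; exact hX.to_subtype
  obtain ⟨gB, p, hp⟩ := hbad ⟨S, inferInstance⟩ this ⟨S.subtype⟩
  obtain ⟨σ, rfl⟩ := hM S (Substructure.fg_closure hX) gB
  refine ⟨p.comp σ, fun g hg hconst => hp (σ.toEmbedding.comp g) ?_ ?_⟩
  · rintro _ ⟨b, rfl⟩
    exact ⟨⟨g b, Substructure.subset_closure (hg ⟨b, rfl⟩)⟩, rfl⟩
  · have := hconst.image_equiv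
    rwa [← Set.range_comp] at this

/-- Compactness: otherwise, bad parameters for ever larger finite subsets of `M` have an
ultraproduct for which no copy of `T` is monochromatic. -/
lemma finitaryRamsey_constOn [Nonempty M] [L.IsRelational] (hM : L.IsUltrahomogeneous M)
    {e : ℕ} {A : Type*} [L.Structure A] [Finite A] {θ : L.Formula (Fin e ⊕ A)}
    (hθ : ∀ (T : Type w) [L.Structure T], Finite T → Nonempty (T ↪[L] M) →
      ∀ p : ExtParams L M e, ∃ g : T ↪[L] M, ConstOn θ p (Set.range g)) :
    FinitaryRamsey L M (ConstOn θ) := by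
  classical
  intro T _ hT neT
  by_contra hbad
  push Not at hbad
  choose p hp using fun X : Finset M =>
    exists_params_forall_not_constOn hM hbad (X : Set M).toFinite
  obtain ⟨g, hg⟩ := hθ T hT neT (ExtParams.ultraproduct (Ultrafilter.of Filter.atTop) p)
  have hfin := Set.finite_range g
  obtain ⟨X, hgX, hX⟩ := (((Filter.eventually_ge_atTop hfin.toFinset).filter_mono
    (Ultrafilter.of_le _)).and (hg.eventually_of_ultraproduct hfin)).exists
  exact hp X g (by simpa using hgX) hX

lemma exists_constOn_of_monochromaticOn {e : ℕ} {A : Type w} [L.Structure A]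
    {θ : L.Formula (Fin e ⊕ A)}
    (hθ : ∀ (T : Type w) [L.Structure T], Finite T → Nonempty (T ↪[L] M) →
      ∀ χ : (A ↪[L] M) → Fin 2, ExtDefinableBy2 L M A θ χ →
        ∃ g : T ↪[L] M, MonochromaticOn L M A T χ g)
    (T : Type w) [L.Structure T] (hT : Finite T) (neT : Nonempty (T ↪[L] M))
    (p : ExtParams L M e) : ∃ g : T ↪[L] M, ConstOn θ p (Set.range g) := by
  classical
  let χ : (A ↪[L] M) → Fin 2 := fun f => if p.Realize θ f then 0 else 1
  have hχ : ∀ f, χ f = 0 ↔ p.Realize θ f := fun f => by by_cases h : p.Realize θ f <;> simp [χ, h]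
  obtain ⟨g, hg⟩ := hθ T hT neT χ ⟨p.N, p.emb, p.eb, hχ⟩
  exact ⟨g, fun f₁ f₂ h₁ h₂ => by rw [← hχ, ← hχ, hg f₁ f₂ h₁ h₂]⟩

lemma _root_.FirstOrder.Language.BoundedFormula.IsAtomic.restrictFreeVar {α β : Type*}
    [DecidableEq α] {n : ℕ} {φ : L.BoundedFormula α n} (h : φ.IsAtomic)
    (f : φ.freeVarFinset → β) : (φ.restrictFreeVar f).IsAtomic := by
  cases h <;> constructor

section Relational

variable [L.IsRelational]

lemma _root_.FirstOrder.Language.Term.card_varFinsetLeft_le_one {α β : Type*} [DecidableEq α]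
    (τ : L.Term (α ⊕ β)) : τ.varFinsetLeft.card ≤ 1 := by
  cases τ with
  | var x => cases x <;> simp
  | func f _ => exact isEmptyElim f

lemma _root_.FirstOrder.Language.BoundedFormula.IsAtomic.card_freeVarFinset_le {t : ℕ}
    (ht : 2 ≤ t) (harity : ∀ n : ℕ, t < n → IsEmpty (L.Relations n)) {α : Type*}
    [DecidableEq α] {n : ℕ} {φ : L.BoundedFormula α n} (h : φ.IsAtomic) :
    φ.freeVarFinset.card ≤ t := by
  cases h with
  | equal t₁ t₂ =>
    calc _ ≤ t₁.varFinsetLeft.card + t₂.varFinsetLeft.card := Finset.card_union_le _ _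
      _ ≤ 1 + 1 := add_le_add t₁.card_varFinsetLeft_le_one t₂.card_varFinsetLeft_le_one
      _ ≤ t := ht
  | @rel l R ts =>
    calc _ ≤ ∑ i, (ts i).varFinsetLeft.card := Finset.card_biUnion_le
      _ ≤ ∑ _i : Fin l, 1 := Finset.sum_le_sum fun i _ => (ts i).card_varFinsetLeft_le_one
      _ = l := by simp
      _ ≤ t := not_lt.1 fun hl => (harity l hl).false R

end Relational

section Reduction

variable {e : ℕ} {A : Type*} [L.Structure A] {p : ExtParams L M e} {X : Set M}

/-- Without parameters the formula is preserved by embeddings. -/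
lemma constOn_of_isAtomic_of_toLeft_eq_empty [DecidableEq A] {α : L.Formula (Fin e ⊕ A)}
    (hα : α.IsAtomic) (h : α.freeVarFinset.toLeft = ∅) : ConstOn α p X := by
  have hright : ∀ x ∈ α.freeVarFinset, x.isRight := by
    rintro (j | a) hx
    · simpa [h] using Finset.mem_toLeft.2 hx
    · rfl
  let β : L.Formula A := α.restrictFreeVar fun x => x.1.getRight (hright x.1 x.2)
  have key : ∀ f : A ↪[L] M, p.Realize α f ↔ β.Realize id := by
    intro f
    rw [Formula.Realize, ← (hα.restrictFreeVar _).isQF.realize_embedding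
      (p.emb.toEmbedding.comp f), Subsingleton.elim (_ ∘ default) default,
      BoundedFormula.realize_restrictFreeVar (Sum.elim p.eb (p.emb ∘ f))]
    · rfl
    · rintro ⟨j | a, hx⟩
      · exact absurd (hright _ hx) (by simp)
      · rfl
  exact fun f₁ f₂ _ _ => (key f₁).trans (key f₂).symm

lemma ConstOn.of_comp {A' : Type*} [L.Structure A'] {θ : L.Formula (Fin e ⊕ A')}
    {α : L.Formula (Fin e ⊕ A)} (ι : A' ↪[L] A)
    (hθα : ∀ f : A ↪[L] M, p.Realize θ (f ∘ ι) ↔ p.Realize α f) (h : ConstOn θ p X) :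
    ConstOn α p X := fun f₁ f₂ h₁ h₂ =>
  (hθα f₁).symm.trans ((h (f₁.comp ι) (f₂.comp ι) ((Set.range_comp_subset_range ι f₁).trans h₁)
    ((Set.range_comp_subset_range ι f₂).trans h₂)).trans (hθα f₂))

end Reduction

/-- An atomic formula with a parameter involves fewer than `t` elements of `A`, so its colouring
is determined by its restriction to a substructure of size `< t`. -/
lemma finitaryRamsey_constOn_of_isAtomic [L.IsRelational] {t : ℕ} (ht : 2 ≤ t)
    (harity : ∀ n : ℕ, t < n → IsEmpty (L.Relations n)) {e : ℕ} {A : Type w} [L.Structure A]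
    [Finite A] (neA : Nonempty (A ↪[L] M))
    (hsmall : ∀ (A' : Type w) [L.Structure A'], Finite A' → Nat.card A' < t →
      Nonempty (A' ↪[L] M) → ∀ θ : L.Formula (Fin e ⊕ A'), θ.IsAtomic →
        FinitaryRamsey L M (ConstOn θ))
    {α : L.Formula (Fin e ⊕ A)} (hα : α.IsAtomic) : FinitaryRamsey L M (ConstOn α) := by
  classical
  rcases α.freeVarFinset.toLeft.eq_empty_or_nonempty with hF | hF
  · exact .of_forall fun _ _ => constOn_of_isAtomic_of_toLeft_eq_empty hα hF
  let S := Substructure.closure L (α.freeVarFinset.toRight : Set A)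
  let g : α.freeVarFinset → Fin e ⊕ S := fun
    | ⟨.inl j, _⟩ => .inl j
    | ⟨.inr a, h⟩ => .inr ⟨a, Substructure.subset_closure (Finset.mem_toRight.2 h)⟩
  have hcard : Nat.card S < t := by
    have hS : Nat.card S = α.freeVarFinset.toRight.card := by
      rw [← Fintype.card_coe, ← Nat.card_eq_fintype_card]
      exact Nat.card_congr
        (Equiv.subtypeEquivRight (Substructure.mem_closure_iff_of_isRelational L _))
    have := Finset.card_toLeft_add_card_toRight (u := α.freeVarFinset)
    have := hα.card_freeVarFinset_le ht harity
    have := hF.card_pos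
    omega
  refine (hsmall S inferInstance hcard ⟨neA.some.comp S.subtype⟩ _ (hα.restrictFreeVar g)).mono
    fun p X h => h.of_comp S.subtype fun f => BoundedFormula.realize_restrictFreeVar _ ?_
  rintro ⟨j | a, _⟩ <;> rfl

lemma finitaryRamsey_constOn_of_isQF {e : ℕ} {A : Type*} [L.Structure A]
    (hatom : ∀ α : L.Formula (Fin e ⊕ A), α.IsAtomic → FinitaryRamsey L M (ConstOn α))
    {ψ : L.Formula (Fin e ⊕ A)} (hψ : ψ.IsQF) : FinitaryRamsey L M (ConstOn ψ) := by
  induction hψ with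
  | falsum => exact .of_forall fun _ _ _ _ _ _ => Iff.rfl
  | of_isAtomic h => exact hatom _ h
  | imp _ _ ih₁ ih₂ =>
    exact (ih₁.and (fun _ => constOn_antitone) ih₂).mono fun _ _ h => h.1.imp h.2

lemma HasQE.exists_isQF_realize_iff (hQE : HasQE L M) [Nonempty M] {N : Type*} [L.Structure N]
    (emb : M ↪ₑ[L] N) {β : Type*} [Finite β] (φ : L.Formula β) :
    ∃ ψ : L.Formula β, ψ.IsQF ∧ ∀ v : β → N, φ.Realize v ↔ ψ.Realize v := by
  obtain ⟨n, ⟨σ⟩⟩ := Finite.exists_equiv_fin β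
  obtain ⟨ψ, hψ, hiff⟩ := hQE n (φ.relabel σ)
  have : N ⊨ L.completeTheory M := (emb.theory_model_iff _).1 inferInstance
  have : Nonempty N := ⟨emb (Classical.arbitrary M)⟩
  refine ⟨ψ.relabel σ.symm, hψ.relabel _, fun v => ?_⟩
  rw [Formula.realize_relabel, ← hiff.realize_iff, Formula.realize_relabel, Function.comp_assoc,
    σ.symm_comp_self, Function.comp_id]

lemma monochromaticOn_of_forall_constOn {A B : Type w} [L.Structure A] [L.Structure B] {k e : ℕ}
    {φ : Fin k → L.Formula (Fin e ⊕ A)} {χ : (A ↪[L] M) → Fin k} {p : ExtParams L M e}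
    (hχ : ∀ f i, χ f = i ↔ p.Realize (φ i) f) {g : B ↪[L] M}
    (hg : ∀ i, ConstOn (φ i) p (Set.range g)) : MonochromaticOn L M A B χ g :=
  fun f₁ f₂ h₁ h₂ => ((hχ f₂ _).2 ((hg _ f₁ f₂ h₁ h₂).1 ((hχ f₁ _).1 rfl))).symm

end

theorem extDefRamsey_of_atomic_general (L : FirstOrder.Language.{u, v}) [L.IsRelational]
    (t : ℕ) (ht : 2 ≤ t)
    (harity : ∀ n : ℕ, t < n → IsEmpty (L.Relations n))
    (M : Type w) [L.Structure M] (hM : L.IsUltrahomogeneous M) (hQE : HasQE L M)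
    (h : ∀ (A : Type w) [L.Structure A], Finite A → Nat.card A < t → Nonempty (A ↪[L] M) →
      ∀ (B : Type w) [L.Structure B], Finite B → Nonempty (B ↪[L] M) →
        ∀ χ : (A ↪[L] M) → Fin 2,
          (∃ (e : ℕ) (φ : L.Formula (Fin e ⊕ A)), φ.IsAtomic ∧ ExtDefinableBy2 L M A φ χ) →
            ∃ g : B ↪[L] M, MonochromaticOn L M A B χ g) :
    ExtDefRamsey L M := by
  intro A _ _ neA k _ B _ _ neB χ ⟨e, φ, N, emb, eb, hχ⟩
  rcases isEmpty_or_nonempty A with hA | hA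
  · exact ⟨neB.some, fun f₁ f₂ _ _ => congrArg χ (Embedding.ext hA.elim)⟩
  have : Nonempty M := ⟨neA.some hA.some⟩
  choose ψ hψQF hψ using fun i => hQE.exists_isQF_realize_iff emb (φ i)
  have hatom (α : L.Formula (Fin e ⊕ A)) (hα : α.IsAtomic) : FinitaryRamsey L M (ConstOn α) :=
    finitaryRamsey_constOn_of_isAtomic ht harity neA (fun A' _ _ hA' neA' θ hθ =>
      finitaryRamsey_constOn hM (exists_constOn_of_monochromaticOn fun T _ hT neT χ hχ =>
        h A' ‹_› hA' neA' T hT neT χ ⟨e, θ, hθ, hχ⟩)) hα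
  obtain ⟨B₀, -, ⟨gB⟩, hB₀⟩ := FinitaryRamsey.forall_finite
    (fun i => finitaryRamsey_constOn_of_isQF hatom (hψQF i)) (fun _ _ => constOn_antitone)
    B ‹_› neB
  obtain ⟨g, -, hg⟩ := hB₀ gB ⟨N, emb, eb⟩
  exact ⟨g, monochromaticOn_of_forall_constOn (fun f i => (hχ f i).trans (hψ i _)) hg⟩

/-- **Proposition 3.15.** Let `L` have maximum arity `t ≥ 2` and let `M` be ultrahomogeneous
with `Th(M)` having QE. If for every `ā ∈ Age(M)` with `|ā| < t`, every `B ∈ Age(M)` and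
every externally atomic-definable 2-colouring of the copies of `A` in `M` there is a
monochromatic copy of `B`, then `M` has the externally definable Ramsey property. -/
theorem extDefRamsey_of_atomic (L : FirstOrder.Language.{u, v}) [L.IsRelational]
    [Countable L.Symbols] (t : ℕ) (ht : 2 ≤ t)
    (harity : ∀ n : ℕ, t < n → IsEmpty (L.Relations n))
    (M : Type w) [L.Structure M] (hM : L.IsUltrahomogeneous M) (hQE : HasQE L M)
    (h : ∀ (A : Type w) [L.Structure A], Finite A → Nat.card A < t → Nonempty (A ↪[L] M) →
      ∀ (B : Type w) [L.Structure B], Finite B → Nonempty (B ↪[L] M) →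
        ∀ χ : (A ↪[L] M) → Fin 2,
          (∃ (e : ℕ) (φ : L.Formula (Fin e ⊕ A)), φ.IsAtomic ∧ ExtDefinableBy2 L M A φ χ) →
            ∃ g : B ↪[L] M, MonochromaticOn L M A B χ g) :
    ExtDefRamsey L M :=
  extDefRamsey_of_atomic_general L t ht harity M hM hQE h

end EDRP
end
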